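/- Let s ≥ 1, let i₁ > i₂ > … > i_s ≥ 1 be integers, let m₁,…,m_s ≥ 1, and set r = ∑_{v=1}^s m_v i_v. Let 𝒜 be the family of N = ∑_v m_v consecutive intervals partitioning {1,…,r}: first m₁ intervals of length i₁, then m₂ intervals of length i₂, and so on. Set ℬ = ⋃_{A∈𝒜} (A \ {min A}) and 𝒞 = {max A : A ∈ 𝒜}. Let λ ∈ ℂ[x] and let φ ∈ Mat_{r×r}(ℂ[x]) be the block-diagonal matrix whose diagonal blocks, in order, are the Jordan blocks J_{|A|}(λ) for A ∈ 𝒜. Then the ideal I_φ of ℂ[x][z₁,…,z_r] satisfies I_φ = (z_b z_c : b ∈ ℬ, c ∈ 𝒞) + I_𝒜, where I_𝒜 is generated by the binomials z_a z_{b+1} − z_b z_{a+1} for all a, b such that {a, a+1} is contained in some interval of 𝒜 and {b, b+1} is contained in some (possibly different or equal) interval of 𝒜. Moreover the radical of I_φ is the ideal (z_a : a ∈ ℬ). -/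

import Mathlib

/-!
Write `∑ₖ φ_{ik} z_k = λ z_i + e_i`, where `e_i = z_{i+1}` if `i + 1` lies in the block of `i`
and `e_i = 0` otherwise. The `λ`-terms cancel, so the generator for `(i, j)` is
`e_j z_i - e_i z_j`: a binomial of `I_𝒜` when both `e`'s are variables, `± z_b z_c` with
`b ∈ ℬ`, `c ∈ 𝒞` when exactly one is, and `0` otherwise; every generator of the right-hand side
arises in this way.

All `e_i` lie in `(z_b : b ∈ ℬ)`, which is radical as the kernel of the substitution
`z_b ↦ 0`. Conversely, walking down a block from its maximum `c`, we have `z_c² ∈ I_φ` and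
`z_b² ≡ z_{b-1} z_{b+1}` modulo `I_φ`, so every `z_b` with `b ∈ ℬ` lies in the radical.
-/

open MvPolynomial

/-- The variable `z_{k+1}` (0-based index `k`) of `R[z₁,…,z_r]`, or `0` if `k ≥ r`. -/
noncomputable def Zv (R : Type*) [CommRing R] (r k : ℕ) : MvPolynomial (Fin r) R :=
  if h : k < r then X ⟨k, h⟩ else 0

/-- The ideal `I_M` of `R[z₁,…,z_r]` generated by `∑ₖ z_k (M_{jk} z_i − M_{ik} z_j)`
for all pairs `i < j`. -/
noncomputable def higgsIdeal {R : Type*} [CommRing R] {r : ℕ}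
    (M : Matrix (Fin r) (Fin r) R) : Ideal (MvPolynomial (Fin r) R) :=
  Ideal.span { p | ∃ i j : Fin r, i < j ∧
    p = ∑ k : Fin r, X k * (C (M j k) * X i - C (M i k) * X j) }

/-- The (0-based) starting indices of the consecutive intervals of lengths given by `L`
partitioning `{0,…,L.sum − 1}`. -/
def starts (L : List ℕ) : List ℕ := (List.range L.length).map fun t => (L.take t).sum

/-- The block-diagonal matrix whose diagonal blocks are Jordan blocks with the single
eigenvalue `lam`, along the consecutive intervals of lengths given by `L`. -/
noncomputable def jordanBlocks (R : Type*) [CommRing R] (r : ℕ) (L : List ℕ) (lam : R) :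
    Matrix (Fin r) (Fin r) R :=
  Matrix.of fun a b =>
    if (a : ℕ) = (b : ℕ) then lam
    else if (b : ℕ) = (a : ℕ) + 1 ∧ (b : ℕ) ∉ starts L then 1 else 0

namespace MvPolynomial

theorem isRadical_span_X_image {σ R : Type*} [CommRing R] [IsReduced R] (s : Set σ) :
    (Ideal.span (X '' s : Set (MvPolynomial σ R))).IsRadical := by
  classical
  set J := Ideal.span (X '' s : Set (MvPolynomial σ R))
  let f : MvPolynomial σ R →ₐ[R] MvPolynomial σ R := aeval fun i => if i ∈ s then 0 else X i
  have hf : (Ideal.Quotient.mkₐ R J).comp f = Ideal.Quotient.mkₐ R J := by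
    refine algHom_ext fun i => ?_
    by_cases hi : i ∈ s
    · simp only [AlgHom.comp_apply, f, aeval_X, hi, if_true, map_zero]
      exact (Ideal.Quotient.eq_zero_iff_mem.mpr
        (Ideal.subset_span (Set.mem_image_of_mem X hi))).symm
    · simp [f, hi]
  have hJ : J = RingHom.ker f := by
    refine le_antisymm (Ideal.span_le.mpr ?_) fun p hp => ?_
    · rintro _ ⟨i, hi, rfl⟩
      simp [f, hi]
    · rw [← Ideal.Quotient.eq_zero_iff_mem, ← Ideal.Quotient.mkₐ_eq_mk R, ← hf]
      simp [(RingHom.mem_ker).mp hp]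
  rw [hJ, RingHom.ker_eq_comap_bot]
  exact Ideal.isRadical_bot.comap _

end MvPolynomial

section JordanBlocks

variable {R : Type*} [CommRing R] {r : ℕ} {L : List ℕ}

theorem Zv_eq_zero_of_le {a : ℕ} (h : r ≤ a) : Zv R r a = 0 := by
  simp [Zv, Nat.not_lt.mpr h]

theorem Zv_val (k : Fin r) : Zv R r k = X k := by
  simp [Zv]

variable (R r L) in
noncomputable def nextInBlock (a : ℕ) : MvPolynomial (Fin r) R :=
  if a + 1 < r ∧ a + 1 ∉ starts L then Zv R r (a + 1) else 0

theorem sum_X_mul_jordanBlocks (lam : R) (i : Fin r) :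
    ∑ k, X k * C (jordanBlocks R r L lam i k) = C lam * X i + nextInBlock R r L i := by
  have hsplit : ∀ k : Fin r, X k * C (jordanBlocks R r L lam i k) =
      (if i = k then C lam * X i else 0) +
        if (k : ℕ) = i + 1 ∧ (k : ℕ) ∉ starts L then X k else 0 := by
    intro k
    by_cases hik : i = k
    · subst hik; simp [jordanBlocks, mul_comm]
    · have : (i : ℕ) ≠ k := fun h => hik (Fin.ext h)
      simp only [jordanBlocks, Matrix.of_apply, this, hik, if_false, zero_add]
      split_ifs <;> simp
  rw [Finset.sum_congr rfl fun k _ => hsplit k, Finset.sum_add_distrib, Finset.sum_ite_eq,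
    if_pos (Finset.mem_univ _)]
  congr 1
  unfold nextInBlock
  split_ifs with h
  · rw [Fintype.sum_eq_single ⟨i + 1, h.1⟩ fun k hk => if_neg ?_]
    · simp [h.2, Zv, h.1]
    · exact fun hk' => hk (Fin.ext hk'.1)
  · refine Finset.sum_eq_zero fun k _ => if_neg ?_
    rintro ⟨hk, hks⟩
    exact h ⟨hk ▸ k.isLt, hk ▸ hks⟩

variable (R r L) in
noncomputable def jordanHiggsGen (a b : ℕ) : MvPolynomial (Fin r) R :=
  nextInBlock R r L b * Zv R r a - nextInBlock R r L a * Zv R r b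

theorem higgsGen_jordanBlocks (lam : R) (i j : Fin r) :
    ∑ k, X k * (C (jordanBlocks R r L lam j k) * X i - C (jordanBlocks R r L lam i k) * X j) =
      jordanHiggsGen R r L i j := by
  have hsum : ∑ k, X k * (C (jordanBlocks R r L lam j k) * X i
      - C (jordanBlocks R r L lam i k) * X j) =
      (∑ k, X k * C (jordanBlocks R r L lam j k)) * X i
        - (∑ k, X k * C (jordanBlocks R r L lam i k)) * X j := by
    simp only [Finset.sum_mul, ← Finset.sum_sub_distrib, mul_sub, mul_assoc]
  rw [hsum, sum_X_mul_jordanBlocks, sum_X_mul_jordanBlocks, jordanHiggsGen, Zv_val, Zv_val]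
  ring

theorem jordanHiggsGen_swap (a b : ℕ) : jordanHiggsGen R r L b a = -jordanHiggsGen R r L a b := by
  simp only [jordanHiggsGen]
  ring

theorem jordanHiggsGen_eq_zero_of_le {a : ℕ} (h : r ≤ a) (b : ℕ) :
    jordanHiggsGen R r L a b = 0 := by
  have hnext : nextInBlock R r L a = 0 := if_neg fun ha => by omega
  simp [jordanHiggsGen, hnext, Zv_eq_zero_of_le h]

theorem higgsIdeal_jordanBlocks (lam : R) :
    higgsIdeal (jordanBlocks R r L lam) =
      Ideal.span (Set.range fun ab : ℕ × ℕ => jordanHiggsGen R r L ab.1 ab.2) := by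
  refine le_antisymm (Ideal.span_le.mpr ?_) (Ideal.span_le.mpr ?_)
  · rintro _ ⟨i, j, -, rfl⟩
    rw [higgsGen_jordanBlocks]
    exact Ideal.subset_span ⟨(i, j), rfl⟩
  · have hlt : ∀ a b, a < b →
        jordanHiggsGen R r L a b ∈ higgsIdeal (jordanBlocks R r L lam) := by
      intro a b hab
      by_cases hb : b < r
      · rw [← higgsGen_jordanBlocks lam ⟨a, hab.trans hb⟩ ⟨b, hb⟩]
        exact Ideal.subset_span ⟨_, _, hab, rfl⟩
      · rw [jordanHiggsGen_swap b a, jordanHiggsGen_eq_zero_of_le (Nat.not_lt.mp hb), neg_zero]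
        exact zero_mem _
    rintro _ ⟨⟨a, b⟩, rfl⟩
    rcases lt_trichotomy a b with hab | rfl | hab
    · exact hlt a b hab
    · simp [jordanHiggsGen]
    · simpa only [jordanHiggsGen_swap a b, neg_neg, SetLike.mem_coe] using neg_mem (hlt b a hab)

theorem jordanHiggsGen_mem_higgsIdeal (lam : R) (a b : ℕ) :
    jordanHiggsGen R r L a b ∈ higgsIdeal (jordanBlocks R r L lam) := by
  rw [higgsIdeal_jordanBlocks]
  exact Ideal.subset_span ⟨(a, b), rfl⟩

theorem jordanHiggsGen_of_step_of_step {a b : ℕ} (ha : a + 1 < r ∧ a + 1 ∉ starts L)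
    (hb : b + 1 < r ∧ b + 1 ∉ starts L) :
    jordanHiggsGen R r L a b = Zv R r a * Zv R r (b + 1) - Zv R r b * Zv R r (a + 1) := by
  rw [jordanHiggsGen, nextInBlock, nextInBlock, if_pos ha, if_pos hb]
  ring

theorem jordanHiggsGen_of_step_of_not_step {a b : ℕ} (ha : a + 1 < r ∧ a + 1 ∉ starts L)
    (hb : ¬(b + 1 < r ∧ b + 1 ∉ starts L)) :
    jordanHiggsGen R r L a b = -(Zv R r (a + 1) * Zv R r b) := by
  rw [jordanHiggsGen, nextInBlock, nextInBlock, if_pos ha, if_neg hb]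
  ring

theorem jordanHiggsGen_of_not_step_of_not_step {a b : ℕ} (ha : ¬(a + 1 < r ∧ a + 1 ∉ starts L))
    (hb : ¬(b + 1 < r ∧ b + 1 ∉ starts L)) : jordanHiggsGen R r L a b = 0 := by
  rw [jordanHiggsGen, nextInBlock, nextInBlock, if_neg ha, if_neg hb]
  ring

theorem Zv_succ_mul_Zv_mem_higgsIdeal (lam : R) {a b : ℕ} (ha : a + 1 < r ∧ a + 1 ∉ starts L)
    (hb : ¬(b + 1 < r ∧ b + 1 ∉ starts L)) :
    Zv R r (a + 1) * Zv R r b ∈ higgsIdeal (jordanBlocks R r L lam) := by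
  rw [← neg_neg (_ * _), ← jordanHiggsGen_of_step_of_not_step ha hb]
  exact neg_mem (jordanHiggsGen_mem_higgsIdeal lam a b)

theorem exists_eq_succ_of_notMem_starts (h0 : 0 ∈ starts L) {a : ℕ} (ha : a ∉ starts L) :
    ∃ b, a = b + 1 :=
  Nat.exists_eq_succ_of_ne_zero fun h => ha (h ▸ h0)

variable (R r L) in
noncomputable def blockMonomialIdeal : Ideal (MvPolynomial (Fin r) R) :=
  Ideal.span { p | ∃ b c : ℕ, (b < r ∧ b ∉ starts L) ∧
    (c < r ∧ (c + 1 = r ∨ (c + 1) ∈ starts L)) ∧ p = Zv R r b * Zv R r c }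

variable (R r L) in
noncomputable def blockBinomialIdeal : Ideal (MvPolynomial (Fin r) R) :=
  Ideal.span { p | ∃ a b : ℕ, (a + 1 < r ∧ (a + 1) ∉ starts L) ∧
    (b + 1 < r ∧ (b + 1) ∉ starts L) ∧ p = Zv R r a * Zv R r (b + 1) - Zv R r b * Zv R r (a + 1) }

theorem jordanHiggsGen_mem_sup {a : ℕ} (ha : a + 1 < r ∧ a + 1 ∉ starts L) (b : ℕ) :
    jordanHiggsGen R r L a b ∈ blockMonomialIdeal R r L + blockBinomialIdeal R r L := by
  by_cases hb : b + 1 < r ∧ b + 1 ∉ starts L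
  · exact Ideal.mem_sup_right (Ideal.subset_span
      ⟨a, b, ha, hb, jordanHiggsGen_of_step_of_step ha hb⟩)
  rw [jordanHiggsGen_of_step_of_not_step ha hb]
  refine Ideal.mem_sup_left (neg_mem ?_)
  by_cases hbr : b < r
  · have hend : b + 1 = r ∨ b + 1 ∈ starts L := by
      by_cases hbs : b + 1 ∈ starts L
      · exact Or.inr hbs
      · exact Or.inl (by by_contra; exact hb ⟨by omega, hbs⟩)
    exact Ideal.subset_span ⟨a + 1, b, ha, ⟨hbr, hend⟩, rfl⟩
  · rw [Zv_eq_zero_of_le (Nat.not_lt.mp hbr), mul_zero]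
    exact zero_mem _

theorem higgsIdeal_jordanBlocks_eq_add (lam : R) (h0 : 0 ∈ starts L) :
    higgsIdeal (jordanBlocks R r L lam) =
      blockMonomialIdeal R r L + blockBinomialIdeal R r L := by
  refine le_antisymm ?_ (sup_le (Ideal.span_le.mpr ?_) (Ideal.span_le.mpr ?_))
  · rw [higgsIdeal_jordanBlocks, Ideal.span_le]
    rintro _ ⟨⟨a, b⟩, rfl⟩
    show jordanHiggsGen R r L a b ∈ _
    by_cases ha : a + 1 < r ∧ a + 1 ∉ starts L
    · exact jordanHiggsGen_mem_sup ha b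
    by_cases hb : b + 1 < r ∧ b + 1 ∉ starts L
    · rw [jordanHiggsGen_swap b a]
      exact neg_mem (jordanHiggsGen_mem_sup hb a)
    · rw [jordanHiggsGen_of_not_step_of_not_step ha hb]
      exact zero_mem _
  · rintro _ ⟨b, c, ⟨hbr, hbs⟩, ⟨hcr, hc⟩, rfl⟩
    obtain ⟨b, rfl⟩ := exists_eq_succ_of_notMem_starts h0 hbs
    refine Zv_succ_mul_Zv_mem_higgsIdeal lam ⟨hbr, hbs⟩ ?_
    rintro ⟨hc1, hcs⟩
    rcases hc with hc | hc
    · omega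
    · exact hcs hc
  · rintro _ ⟨a, b, ha, hb, rfl⟩
    rw [← jordanHiggsGen_of_step_of_step ha hb]
    exact jordanHiggsGen_mem_higgsIdeal lam a b

variable (R r L) in
noncomputable def nonStartVarIdeal : Ideal (MvPolynomial (Fin r) R) :=
  Ideal.span { p | ∃ a : ℕ, a < r ∧ a ∉ starts L ∧ p = Zv R r a }

theorem nonStartVarIdeal_eq_span_X_image :
    nonStartVarIdeal R r L = Ideal.span (X '' { k : Fin r | (k : ℕ) ∉ starts L }) := by
  rw [nonStartVarIdeal]
  congr 1
  ext p
  constructor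
  · rintro ⟨a, har, has, rfl⟩
    exact ⟨⟨a, har⟩, has, (Zv_val ⟨a, har⟩).symm⟩
  · rintro ⟨k, hk, rfl⟩
    exact ⟨k, k.isLt, hk, (Zv_val k).symm⟩

theorem Zv_mem_nonStartVarIdeal {a : ℕ} (ha : a ∉ starts L) :
    Zv R r a ∈ nonStartVarIdeal R r L := by
  by_cases har : a < r
  · exact Ideal.subset_span ⟨a, har, ha, rfl⟩
  · rw [Zv_eq_zero_of_le (Nat.not_lt.mp har)]
    exact zero_mem _

theorem higgsIdeal_jordanBlocks_le_nonStartVarIdeal (lam : R) :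
    higgsIdeal (jordanBlocks R r L lam) ≤ nonStartVarIdeal R r L := by
  have hnext : ∀ a, nextInBlock R r L a ∈ nonStartVarIdeal R r L := fun a => by
    unfold nextInBlock
    split_ifs with ha
    · exact Zv_mem_nonStartVarIdeal ha.2
    · exact zero_mem _
  rw [higgsIdeal_jordanBlocks, Ideal.span_le]
  rintro _ ⟨⟨a, b⟩, rfl⟩
  exact sub_mem (Ideal.mul_mem_right _ _ (hnext b)) (Ideal.mul_mem_right _ _ (hnext a))

theorem Zv_mem_radical_higgsIdeal (lam : R) (h0 : 0 ∈ starts L) {a : ℕ} (ha : a ∉ starts L) :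
    Zv R r a ∈ (higgsIdeal (jordanBlocks R r L lam)).radical := by
  induction hn : r - a generalizing a with
  | zero =>
    rw [Zv_eq_zero_of_le (by omega)]
    exact zero_mem _
  | succ n ih =>
    obtain ⟨a, rfl⟩ := exists_eq_succ_of_notMem_starts h0 ha
    refine Ideal.mem_radical_of_pow_mem (m := 2) ?_
    by_cases hstep : a + 1 + 1 < r ∧ a + 1 + 1 ∉ starts L
    · have hsq : Zv R r (a + 1) ^ 2 =
          Zv R r a * Zv R r (a + 1 + 1) - jordanHiggsGen R r L a (a + 1) := by
        rw [jordanHiggsGen_of_step_of_step ⟨by omega, ha⟩ hstep]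
        ring
      rw [hsq]
      exact sub_mem (Ideal.mul_mem_left _ _ (ih hstep.2 (by omega)))
        (Ideal.le_radical (jordanHiggsGen_mem_higgsIdeal lam _ _))
    · rw [sq]
      exact Ideal.le_radical (Zv_succ_mul_Zv_mem_higgsIdeal lam ⟨by omega, ha⟩ hstep)

theorem radical_higgsIdeal_jordanBlocks [IsReduced R] (lam : R) (h0 : 0 ∈ starts L) :
    (higgsIdeal (jordanBlocks R r L lam)).radical = nonStartVarIdeal R r L := by
  have hrad : (nonStartVarIdeal R r L).IsRadical := by
    rw [nonStartVarIdeal_eq_span_X_image]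
    exact MvPolynomial.isRadical_span_X_image _
  refine le_antisymm (hrad.radical_le_iff.mpr (higgsIdeal_jordanBlocks_le_nonStartVarIdeal lam))
    (Ideal.span_le.mpr ?_)
  rintro _ ⟨a, -, ha, rfl⟩
  exact Zv_mem_radical_higgsIdeal lam h0 ha

end JordanBlocks

theorem zero_mem_starts {L : List ℕ} (hL : L ≠ []) : 0 ∈ starts L :=
  List.mem_map.mpr ⟨0, List.mem_range.mpr (List.length_pos_iff.mpr hL), by simp⟩

/-- Indices are 0-based: `ℬ` is the set of non-starts `b < r` of blocks, `𝒞` the set of block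
maxima `c` (`c + 1 = r` or `c + 1` is a start), and `{a, a + 1}` lies in a block iff
`a + 1 < r` and `a + 1` is not a start. -/
theorem stmt3_general (s : ℕ) (hs : 1 ≤ s) (iv m : Fin s → ℕ)
    (hmpos : ∀ v, 1 ≤ m v)
    (r : ℕ) (lam : Polynomial ℂ)
    (L : List ℕ) (hL : L = (List.ofFn fun v => List.replicate (m v) (iv v)).flatten) :
    higgsIdeal (jordanBlocks (Polynomial ℂ) r L lam) =
      Ideal.span { p | ∃ b c : ℕ, (b < r ∧ b ∉ starts L) ∧
        (c < r ∧ (c + 1 = r ∨ (c + 1) ∈ starts L)) ∧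
        p = Zv (Polynomial ℂ) r b * Zv (Polynomial ℂ) r c } +
      Ideal.span { p | ∃ a b : ℕ,
        (a + 1 < r ∧ (a + 1) ∉ starts L) ∧ (b + 1 < r ∧ (b + 1) ∉ starts L) ∧
        p = Zv (Polynomial ℂ) r a * Zv (Polynomial ℂ) r (b + 1)
          - Zv (Polynomial ℂ) r b * Zv (Polynomial ℂ) r (a + 1) } ∧
    (higgsIdeal (jordanBlocks (Polynomial ℂ) r L lam)).radical =
      Ideal.span { p | ∃ a : ℕ, a < r ∧ a ∉ starts L ∧ p = Zv (Polynomial ℂ) r a } := by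
  have hne : L ≠ [] := by
    let v₀ : Fin s := ⟨0, hs⟩
    have hfirst : List.replicate (m v₀) (iv v₀) ≠ [] := by
      simpa [List.replicate_eq_nil_iff] using Nat.one_le_iff_ne_zero.mp (hmpos v₀)
    rw [hL, Ne, List.flatten_eq_nil_iff]
    exact fun hnil => hfirst (hnil _ (List.mem_ofFn.mpr ⟨v₀, rfl⟩))
  have h0 := zero_mem_starts hne
  exact ⟨higgsIdeal_jordanBlocks_eq_add lam h0, radical_higgsIdeal_jordanBlocks lam h0⟩

/-- Proposition 3.7: for a Higgs field over `ℂ[x]` consisting of Jordan blocks of sizes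
`i₁ > … > i_s` with multiplicities `m₁,…,m_s` and a single eigenvalue `λ ∈ ℂ[x]`, the
ideal `I_φ` equals `(z_b z_c : b ∈ ℬ, c ∈ 𝒞) + I_𝒜`, and its radical is `(z_a : a ∈ ℬ)`.
Here, 0-based: `ℬ` = non-minimal elements of blocks (non-starts), `𝒞` = maxima of blocks,
and `I_𝒜` is generated by `z_a z_{b+1} − z_b z_{a+1}` for `a, a+1` in a common block and
`b, b+1` in a common block. -/
theorem stmt3 (s : ℕ) (hs : 1 ≤ s) (iv m : Fin s → ℕ)
    (hdec : StrictAnti iv) (hipos : ∀ v, 1 ≤ iv v) (hmpos : ∀ v, 1 ≤ m v)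
    (r : ℕ) (hr : r = ∑ v, m v * iv v) (lam : Polynomial ℂ)
    (L : List ℕ) (hL : L = (List.ofFn fun v => List.replicate (m v) (iv v)).flatten) :
    higgsIdeal (jordanBlocks (Polynomial ℂ) r L lam) =
      Ideal.span { p | ∃ b c : ℕ, (b < r ∧ b ∉ starts L) ∧
        (c < r ∧ (c + 1 = r ∨ (c + 1) ∈ starts L)) ∧
        p = Zv (Polynomial ℂ) r b * Zv (Polynomial ℂ) r c } +
      Ideal.span { p | ∃ a b : ℕ,
        (a + 1 < r ∧ (a + 1) ∉ starts L) ∧ (b + 1 < r ∧ (b + 1) ∉ starts L) ∧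
        p = Zv (Polynomial ℂ) r a * Zv (Polynomial ℂ) r (b + 1)
          - Zv (Polynomial ℂ) r b * Zv (Polynomial ℂ) r (a + 1) } ∧
    (higgsIdeal (jordanBlocks (Polynomial ℂ) r L lam)).radical =
      Ideal.span { p | ∃ a : ℕ, a < r ∧ a ∉ starts L ∧ p = Zv (Polynomial ℂ) r a } :=
  stmt3_general s hs iv m hmpos r lam L hL
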